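/- arXiv:2602.09470 — 3 statements merged into one kernel-verified Lean document; each statement's English description precedes it below -/
import Mathlib

section
/- (Erdős–Rado, n = 1 case) For every infinite cardinal κ, (2^κ)^+ → (κ^+)²_κ: for every function f from the 2-element subsets of a set X of cardinality (2^κ)^+ to a set of colors of cardinality κ, there exists a subset H ⊆ X of cardinality κ^+ such that f is constant on the 2-element subsets of H. -/
/-!
Colour a pair `{x, y}` by `p x y`. Build a set `A` of size at most `2 ^ κ` that realizes types:
whenever `S ⊆ A` has size at most `κ` and some `y ∉ S` induces the colouring `s ↦ p y s` of `S`,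
some `z ∈ A \ S` induces the same colouring. It is the union of a chain of length `κ⁺`, and it is
closed under small sets because `κ⁺` is regular. Pick `x₀ ∉ A` and choose by transfinite recursion
`a γ ∈ A` (`γ < κ⁺`) realizing the type of `x₀` over `{a β | β < γ}`. Then the colour of
`{a β, a γ}` for `β < γ` is `p x₀ (a β)`, which depends on `β` only, and since `κ < cf κ⁺` the
pigeonhole principle gives `κ⁺` many `β` on which it is constant.
-/

universe u

open Cardinal Set Order

theorem WellFoundedLT.exists_forall_rec {W : Type*} {α : Sort*} [LT W] [WellFoundedLT W]
    (P : (o : W) → ((β : W) → β < o → α) → α → Prop) (hP : ∀ o ih, ∃ x, P o ih x) :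
    ∃ a : W → α, ∀ o, P o (fun β _ ↦ a β) (a o) :=
  ⟨wellFounded_lt.fix fun o ih ↦ (hP o ih).choose, fun o ↦ by
    rw [WellFounded.fix_eq]
    exact (hP _ _).choose_spec⟩

namespace Cardinal

theorem mk_iUnion_le_of_le {α ι : Type u} {f : ι → Set α} {μ : Cardinal.{u}} (hμ : ℵ₀ ≤ μ)
    (hι : #ι ≤ μ) (hf : ∀ i, #(f i) ≤ μ) : #(⋃ i, f i) ≤ μ :=
  (mk_iUnion_le f).trans (mul_le_of_le hμ hι (ciSup_le' hf))

variable {κ : Cardinal.{u}}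

theorem mk_Iio_succ_ord_toType_le (o : (succ κ).ord.ToType) : #(Iio o) ≤ κ :=
  lt_succ_iff.mp (by simpa using mk_Iio_lt o)

theorem exists_forall_lt_of_mk_le (hκ : ℵ₀ ≤ κ) (s : Set (succ κ).ord.ToType) (hs : #s ≤ κ) :
    ∃ o, ∀ β ∈ s, β < o := by
  refine not_isCofinal_iff.mp fun hcof ↦ ?_
  have hle := cof_le hcof
  rw [Ordinal.cof_toType, (isRegular_succ hκ).cof_ord] at hle
  exact (lt_succ κ).not_ge (hle.trans hs)

end Cardinal

namespace ErdosRado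

variable {X C : Type u} {κ : Cardinal.{u}}

theorem exists_closed_of_mk_le {μ : Cardinal.{u}} (hκ : ℵ₀ ≤ κ) (hκμ : succ κ ≤ μ)
    (hμ : μ ^ κ ≤ μ) (F : Set X → Set X) (hF : ∀ S : Set X, #S ≤ κ → #(F S) ≤ μ) :
    ∃ A : Set X, #A ≤ μ ∧ ∀ S ⊆ A, #S ≤ κ → F S ⊆ A := by
  have hμ₀ : ℵ₀ ≤ μ := hκ.trans ((le_succ κ).trans hκμ)
  obtain ⟨g, hg⟩ := WellFoundedLT.exists_forall_rec (W := (succ κ).ord.ToType)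
    (fun o ih A ↦ A = ⋃ S : {S : Set X // S ⊆ ⋃ β : Iio o, ih β β.2 ∧ #S ≤ κ}, F S)
    (fun _ _ ↦ ⟨_, rfl⟩)
  have hg_card (o) : #(g o) ≤ μ := by
    induction o using WellFoundedLT.induction with
    | _ o ih =>
    have hbelow : #(⋃ β : Iio o, g β) ≤ μ :=
      mk_iUnion_le_of_le hμ₀ ((mk_Iio_succ_ord_toType_le o).trans ((le_succ κ).trans hκμ))
        fun β ↦ ih β β.2
    rw [hg o]
    refine mk_iUnion_le_of_le hμ₀ ?_ fun S ↦ hF S S.2.2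
    calc _ ≤ max #(⋃ β : Iio o, g β) ℵ₀ ^ κ := mk_bounded_subset_le _ _
      _ ≤ μ ^ κ := power_le_power_right (max_le hbelow hμ₀)
      _ ≤ μ := hμ
  refine ⟨⋃ o, g o, mk_iUnion_le_of_le hμ₀ (by rwa [mk_ord_toType]) hg_card, ?_⟩
  intro S hSA hSκ
  choose o ho using fun x : S ↦ mem_iUnion.mp (hSA x.2)
  obtain ⟨top, htop⟩ := exists_forall_lt_of_mk_le hκ (range o) (mk_range_le.trans hSκ)
  have hS_below : S ⊆ ⋃ β : Iio top, g β := fun x hx ↦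
    mem_iUnion.mpr ⟨⟨o ⟨x, hx⟩, htop _ ⟨_, rfl⟩⟩, ho _⟩
  calc F S ⊆ g top := by
        rw [hg top]
        exact subset_iUnion_of_subset ⟨S, hS_below, hSκ⟩ subset_rfl
    _ ⊆ ⋃ o, g o := subset_iUnion g top

theorem exists_realizers_of_types (p : X → X → C) (S : Set X) :
    ∃ R : Set X, #R ≤ #C ^ #S ∧ ∀ y ∉ S, ∃ z ∈ R, z ∉ S ∧ ∀ s ∈ S, p z s = p y s := by
  let type : {y // y ∉ S} → S → C := fun y s ↦ p y s
  refine ⟨range fun t : range type ↦ (t.2.choose : X), ?_, fun y hy ↦ ?_⟩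
  · rw [power_def]
    exact mk_range_le.trans (mk_set_le _)
  · have hrealized : ∃ z, type z = type ⟨y, hy⟩ := ⟨_, rfl⟩
    exact ⟨_, ⟨⟨_, hrealized⟩, rfl⟩, hrealized.choose.2,
      fun s hs ↦ congrFun hrealized.choose_spec ⟨s, hs⟩⟩

theorem exists_realizing_set (hκ : ℵ₀ ≤ κ) (hC : #C ≤ κ) (p : X → X → C) :
    ∃ A : Set X, #A ≤ 2 ^ κ ∧
      ∀ S ⊆ A, #S ≤ κ → ∀ y ∉ S, ∃ z ∈ A, z ∉ S ∧ ∀ s ∈ S, p z s = p y s := by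
  choose R hR_card hR using exists_realizers_of_types p
  have hR_le (S : Set X) (hS : #S ≤ κ) : #(R S) ≤ 2 ^ κ :=
    calc #(R S) ≤ #C ^ #S := hR_card S
      _ ≤ κ ^ #S := power_le_power_right hC
      _ ≤ κ ^ κ := power_le_power_left (aleph0_pos.trans_le hκ).ne' hS
      _ = 2 ^ κ := power_self_eq hκ
  have hpow : (2 ^ κ : Cardinal) ^ κ ≤ 2 ^ κ := by rw [← power_mul, mul_eq_self hκ]
  obtain ⟨A, hA_card, hA⟩ :=
    exists_closed_of_mk_le hκ (succ_le_of_lt (cantor κ)) hpow R hR_le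
  refine ⟨A, hA_card, fun S hSA hSκ y hy ↦ ?_⟩
  obtain ⟨z, hzR, hzS, hz⟩ := hR S y hy
  exact ⟨z, hA S hSA hSκ hzR, hzS, hz⟩

theorem exists_injective_endHomogeneous {W : Type u} [LinearOrder W] [WellFoundedLT W]
    (hW : ∀ o : W, #(Iio o) ≤ κ) (hκ : ℵ₀ ≤ κ) (hC : #C ≤ κ) (hX : 2 ^ κ < #X)
    (p : X → X → C) :
    ∃ (a : W → X) (x₀ : X), Function.Injective a ∧ ∀ β γ, β < γ → p (a γ) (a β) = p x₀ (a β) := by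
  obtain ⟨A, hA_card, hA⟩ := exists_realizing_set hκ hC p
  obtain ⟨x₀, hx₀⟩ : ∃ x₀, x₀ ∉ A := by
    refine (ne_univ_iff_exists_notMem A).mp fun hA_univ ↦ hX.not_ge ?_
    rwa [hA_univ, mk_univ] at hA_card
  obtain ⟨a, ha⟩ := WellFoundedLT.exists_forall_rec (W := W) (α := A)
    (fun _ ih z ↦ ∀ β hβ, (z : X) ≠ ih β hβ ∧ p z (ih β hβ) = p x₀ (ih β hβ)) fun o ih ↦ by
      let S := range fun β : Iio o ↦ (ih β β.2 : X)
      have hSA : S ⊆ A := by rintro _ ⟨β, rfl⟩; exact (ih β β.2).2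
      obtain ⟨z, hzA, hzS, hz⟩ :=
        hA S hSA (mk_range_le.trans (hW o)) x₀ fun hx₀S ↦ hx₀ (hSA hx₀S)
      exact ⟨⟨z, hzA⟩, fun β hβ ↦ ⟨fun h ↦ hzS ⟨⟨β, hβ⟩, h.symm⟩, hz _ ⟨⟨β, hβ⟩, rfl⟩⟩⟩
  refine ⟨fun o ↦ a o, x₀, ?_, fun β γ h ↦ (ha γ β h).2⟩
  exact Function.Injective.of_lt_imp_ne fun β γ h ↦ (ha γ β h).1.symm

theorem exists_homogeneous (hκ : ℵ₀ ≤ κ) (hC : #C ≤ κ) (hX : 2 ^ κ < #X) (p : X → X → C)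
    (hp : ∀ x y, x ≠ y → p x y = p y x) :
    ∃ H : Set X, #H = succ κ ∧ ∃ c, ∀ x ∈ H, ∀ y ∈ H, x ≠ y → p x y = c := by
  obtain ⟨a, x₀, ha_inj, ha⟩ := exists_injective_endHomogeneous
    (W := (succ κ).ord.ToType) mk_Iio_succ_ord_toType_le hκ hC hX p
  obtain ⟨c, hc⟩ := infinite_pigeonhole_card (fun o ↦ p x₀ (a o)) (succ κ) (mk_ord_toType _).ge
    (hκ.trans (le_succ κ)) (by rw [(isRegular_succ hκ).cof_ord]; exact hC.trans_lt (lt_succ κ))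
  refine ⟨a '' ((fun o ↦ p x₀ (a o)) ⁻¹' {c}), ?_, c, ?_⟩
  · rw [mk_image_eq_of_injOn _ _ ha_inj.injOn]
    exact le_antisymm ((mk_set_le _).trans_eq (mk_ord_toType _)) hc
  · rintro _ ⟨β, hβ, rfl⟩ _ ⟨γ, hγ, rfl⟩ hne
    rcases lt_or_gt_of_ne (ne_of_apply_ne a hne) with h | h
    · rw [hp _ _ hne, ha β γ h]
      exact hβ
    · rw [ha γ β h]
      exact hγ

end ErdosRado

theorem stmt_7 (κ : Cardinal.{u}) (hκ : Cardinal.aleph0 ≤ κ)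
    (X C : Type u) (hX : Cardinal.mk X = Order.succ (2 ^ κ)) (hC : Cardinal.mk C = κ)
    (f : {s : Finset X // s.card = 2} → C) :
    ∃ H : Set X, Cardinal.mk H = Order.succ κ ∧
      ∃ c : C, ∀ s : {s : Finset X // s.card = 2}, ↑s.1 ⊆ H → f s = c := by
  classical
  have : Nonempty C := mk_ne_zero_iff.mp (hC ▸ (aleph0_pos.trans_le hκ).ne')
  let p (x y : X) : C := if h : x ≠ y then f ⟨{x, y}, Finset.card_pair h⟩ else Classical.arbitrary C
  have hp (x y : X) (h : x ≠ y) : p x y = f ⟨{x, y}, Finset.card_pair h⟩ := dif_pos h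
  have hp_symm (x y : X) (h : x ≠ y) : p x y = p y x := by
    simp only [hp x y h, hp y x h.symm, Finset.pair_comm]
  obtain ⟨H, hH, c, hc⟩ :=
    ErdosRado.exists_homogeneous hκ hC.le (hX ▸ lt_succ _) p hp_symm
  refine ⟨H, hH, c, fun ⟨s, hs⟩ hsH ↦ ?_⟩
  obtain ⟨x, y, hxy, rfl⟩ := Finset.card_eq_two.mp hs
  exact (hp x y hxy).symm.trans (hc x (hsH (by simp)) y (hsH (by simp)) hxy)
end

section
/- Let Θ be an ordinal with the order topology and let ℙ = {pᵢ : i < 𝔠⁺} where 𝔠⁺ = (2^{ℵ₀})⁺. Then the set Γ = {◇pᵢ : i < 𝔠⁺} ∪ {□(pᵢ → ◇pⱼ) : i < j < 𝔠⁺} is not satisfiable at any point of any topological model based on (Θ, order topology). -/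
/-- Modal formulas over a set `P` of propositional variables. -/
inductive Fml (P : Type*) where
  | var (p : P) : Fml P
  | bot : Fml P
  | imp (φ ψ : Fml P) : Fml P
  | dia (φ : Fml P) : Fml P

/-- Negation. -/
def Fml.neg {P : Type*} (φ : Fml P) : Fml P := Fml.imp φ Fml.bot

/-- The box modality as the dual of the diamond. -/
def Fml.box {P : Type*} (φ : Fml P) : Fml P := (Fml.dia φ.neg).neg

/-- Verum. -/
def Fml.top {P : Type*} : Fml P := Fml.neg Fml.bot

/-- Topological semantics: the set of points of a topological model where a
formula holds; `◇φ` is interpreted by the derived-set operator. -/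
def tsat {P X : Type*} [TopologicalSpace X] (V : P → Set X) : Fml P → Set X
  | Fml.var p => V p
  | Fml.bot => ∅
  | Fml.imp φ ψ => (tsat V φ)ᶜ ∪ tsat V ψ
  | Fml.dia φ => derivedSet (tsat V φ)

/-- The order (interval) topology on the set of ordinals below Θ. -/
def ordTop (Θ : Ordinal) : TopologicalSpace {x : Ordinal // x < Θ} :=
  Preorder.topology {x : Ordinal // x < Θ}

/-- Index set for the propositional variables: the ordinals below 𝔠⁺. -/
def PIdx : Type _ := {i : Ordinal // i < (Order.succ (2 ^ Cardinal.aleph0) : Cardinal).ord}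

noncomputable instance : LinearOrder PIdx := by unfold PIdx; infer_instance

/-- Γ = {◇pᵢ : i < 𝔠⁺} ∪ {□(pᵢ → ◇pⱼ) : i < j < 𝔠⁺}. -/
def GammaSet : Set (Fml PIdx) :=
  {φ | ∃ i : PIdx, φ = Fml.dia (Fml.var i)} ∪
    {φ | ∃ i j : PIdx, i < j ∧ φ = Fml.box (Fml.imp (Fml.var i) (Fml.dia (Fml.var j)))}

/-!
Suppose `α` satisfies `Γ`. Each `◇pᵢ` makes `α` a limit of `⟦pᵢ⟧` from the left, and each
`□(pᵢ → ◇pⱼ)` gives `βᵢⱼ < α` such that every `pᵢ`-point of `(βᵢⱼ, α)` is a limit of `⟦pⱼ⟧`.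
If along some increasing sequence `i₀ < i₁ < ⋯` all the `β_{iₖ iₗ}` lay below one `β < α`, the
least point of `(β, α]` that is a limit of `⟦p_{iₖ}⟧` would strictly decrease with `k`, which is
impossible in an ordinal. Such a sequence exists: if `cf α > ω` any sequence will do, and if
`cf α = ω` colour `{i, j}` by the first term of a cofinal `ω`-sequence above `βᵢⱼ` and take a
homogeneous sequence from `𝔠⁺ → (ω)²_ω`. This partition relation is the Erdős–Rado argument: were
every greedy end-homogeneous set below a point countable, these sets with their colours would code
the `𝔠⁺` points injectively by countable ordinals labelled with colours, of which there are `𝔠`.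
-/

open Set Cardinal

section ErdosRado

universe u

theorem mk_sigma_Iio_arrow_nat_le_continuum :
    #{x : Σ o : Ordinal.{u}, (Iio o → ℕ) // x.1 < (ℵ₁ : Cardinal.{u}).ord} ≤ 𝔠 := by
  rw [mk_congr (Equiv.subtypeSigmaEquiv (fun o : Ordinal.{u} => Iio o → ℕ)
    (· < (ℵ₁ : Cardinal.{u}).ord)), mk_sigma]
  calc _ ≤ #{o : Ordinal.{u} // o < (ℵ₁ : Cardinal.{u}).ord} *
        ⨆ o : {o : Ordinal.{u} // o < (ℵ₁ : Cardinal.{u}).ord}, #(Iio o.1 → ℕ) :=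
        sum_le_mk_mul_iSup _
    _ ≤ 𝔠 * 𝔠 := by
      gcongr
      · change #(Iio _) ≤ _
        rw [mk_Iio_ordinal, card_ord, ← lift_continuum.{u + 1, u}, lift_le]
        exact aleph_one_le_continuum
      · refine ciSup_le' fun o => ?_
        have : lift.{0} #(Iio o.1) ≤ ℵ₀ := by
          rw [mk_Iio_ordinal, lift_lift, lift_le_aleph0, ← lt_aleph_one_iff, ← lt_ord]
          exact o.2
        rw [mk_arrow, mk_nat, lift_aleph0, ← aleph0_power_aleph0]
        exact power_le_power_left aleph0_ne_zero this
    _ = 𝔠 := mul_eq_self aleph0_le_continuum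

variable {ι : Type u} [LinearOrder ι] [WellFoundedLT ι]

theorem Set.Infinite.exists_strictMono_nat {M : Set ι} (hM : M.Infinite) :
    ∃ f : ℕ → ι, StrictMono f ∧ ∀ k, f k ∈ M := by
  have := hM.to_subtype
  obtain ⟨f, hf | hf⟩ := Infinite.exists_strictMono_or_strictAnti M
  · exact ⟨fun k => f k, (Subtype.strictMono_coe _).comp hf, fun k => (f k).2⟩
  · exact (not_strictAnti_of_wellFoundedLT f hf).elim

variable (c : ι → ι → ℕ)

/-- Going up from the bottom, `a < b` is put in whenever `c a' a = c a' b` for every `a'` already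
put in; the result is end-homogeneous (`color_eq_of_mem_greedySet`). -/
def greedySet (b : ι) : Set ι :=
  {a | WellFounded.fix wellFounded_lt
    (fun a ih => a < b ∧ ∀ a' (h : a' < a), ih a' h → c a' a = c a' b) a}

variable {c}

theorem mem_greedySet {a b : ι} :
    a ∈ greedySet c b ↔ a < b ∧ ∀ a' < a, a' ∈ greedySet c b → c a' a = c a' b := by
  rw [greedySet, mem_ofPred_eq, WellFounded.fix_eq]
  rfl

theorem lt_of_mem_greedySet {a b : ι} (h : a ∈ greedySet c b) : a < b :=
  (mem_greedySet.1 h).1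

theorem color_eq_of_mem_greedySet {a a' b : ι} (h : a ∈ greedySet c b)
    (h' : a' ∈ greedySet c b) (hlt : a' < a) : c a' a = c a' b :=
  (mem_greedySet.1 h).2 a' hlt h'

/-- If `e` fixes everything below `a`, then `e a < a` would itself lie in `greedySet c b₁`, and
`e` would send it to `e a` as well. -/
theorem not_coe_orderIso_greedySet_apply_lt {b₁ b₂ : ι} (e : greedySet c b₁ ≃o greedySet c b₂)
    (he : ∀ a, c (e a) b₂ = c a b₁) (a : greedySet c b₁)
    (ih : ∀ a' < a, (e a' : ι) = a') : ¬ (e a : ι) < a := by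
  intro hlt
  have hmem : (e a : ι) ∈ greedySet c b₁ := by
    refine mem_greedySet.2 ⟨hlt.trans (lt_of_mem_greedySet a.2), fun a' hlt' ha' => ?_⟩
    have hfix : (e ⟨a', ha'⟩ : ι) = a' := ih ⟨a', ha'⟩ (hlt'.trans hlt)
    have ha'₂ : a' ∈ greedySet c b₂ := hfix ▸ (e ⟨a', ha'⟩).2
    rw [color_eq_of_mem_greedySet (e a).2 ha'₂ hlt', ← he ⟨a', ha'⟩, hfix]
  have := ih ⟨_, hmem⟩ hlt
  rw [← Subtype.ext_iff, e.apply_eq_iff_eq] at this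
  exact hlt.ne (congrArg Subtype.val this)

theorem coe_orderIso_greedySet_apply {b₁ b₂ : ι} (e : greedySet c b₁ ≃o greedySet c b₂)
    (he : ∀ a, c (e a) b₂ = c a b₁) (a : greedySet c b₁) : (e a : ι) = a := by
  induction a using WellFoundedLT.induction with
  | ind a ih =>
    rcases lt_trichotomy (e a : ι) a with hlt | heq | hgt
    · exact (not_coe_orderIso_greedySet_apply_lt e he a ih hlt).elim
    · exact heq
    · refine (not_coe_orderIso_greedySet_apply_lt e.symm (fun x => ?_) (e a) (fun x hx => ?_)
        (by simpa using hgt)).elim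
      · simpa using (he (e.symm x)).symm
      · have := ih (e.symm x) (by simpa using e.symm.lt_iff_lt.2 hx)
        simp only [OrderIso.apply_symm_apply] at this
        exact this.symm

theorem not_orderIso_greedySet {b₁ b₂ : ι} (hb : b₁ < b₂) (e : greedySet c b₁ ≃o greedySet c b₂)
    (he : ∀ a, c (e a) b₂ = c a b₁) : False := by
  have hfix := coe_orderIso_greedySet_apply e he
  have hmem : b₁ ∈ greedySet c b₂ := by
    refine mem_greedySet.2 ⟨hb, fun a' _ ha' => ?_⟩
    have hx : (e.symm ⟨a', ha'⟩ : ι) = a' := by simpa using (hfix (e.symm ⟨a', ha'⟩)).symm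
    simpa [hx] using (he (e.symm ⟨a', ha'⟩)).symm
  have hx : (e.symm ⟨b₁, hmem⟩ : ι) = b₁ := by simpa using (hfix (e.symm ⟨b₁, hmem⟩)).symm
  exact lt_irrefl b₁ (lt_of_mem_greedySet (hx ▸ (e.symm ⟨b₁, hmem⟩).2))

variable (c)

noncomputable def greedyCode (b : ι) : Σ o : Ordinal.{u}, (Iio o → ℕ) :=
  ⟨Ordinal.type (α := greedySet c b) (· < ·),
    fun η => c (OrderIso.ofRelIsoLT (Ordinal.enum (α := greedySet c b) (· < ·)) η) b⟩

theorem greedyCode_injective : Function.Injective (greedyCode c) := by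
  have key : ∀ {o o' : Ordinal.{u}} {H : Iio o → ℕ} {H' : Iio o' → ℕ},
      (⟨o, H⟩ : Σ o : Ordinal.{u}, (Iio o → ℕ)) = ⟨o', H'⟩ →
      ∃ h : Iio o = Iio o', ∀ η, H η = H' (OrderIso.setCongr _ _ h η) := by
    rintro _ _ _ _ ⟨⟩
    exact ⟨rfl, fun _ => rfl⟩
  intro b₁ b₂ h
  by_contra hne
  wlog hlt : b₁ < b₂ generalizing b₁ b₂
  · exact this h.symm (Ne.symm hne) ((not_lt.1 hlt).lt_of_ne' hne)
  obtain ⟨hI, hH⟩ := key h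
  set E₁ := OrderIso.ofRelIsoLT (Ordinal.enum (α := greedySet c b₁) (· < ·))
  set E₂ := OrderIso.ofRelIsoLT (Ordinal.enum (α := greedySet c b₂) (· < ·))
  exact not_orderIso_greedySet hlt (E₁.symm.trans ((OrderIso.setCongr _ _ hI).trans E₂))
    fun a => by simpa using (hH (E₁.symm a)).symm

variable {c} in
theorem mk_le_continuum_of_countable_greedySet (h : ∀ b, (greedySet c b).Countable) :
    #ι ≤ 𝔠 := by
  have hcode : ∀ b, (greedyCode c b).1 < (ℵ₁ : Cardinal.{u}).ord := fun b => by
    rw [lt_ord, greedyCode, Ordinal.card_type, lt_aleph_one_iff]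
    exact (h b).le_aleph0
  have hinj : Function.Injective fun b => (⟨greedyCode c b, hcode b⟩ :
      {x : Σ o : Ordinal.{u}, (Iio o → ℕ) // x.1 < (ℵ₁ : Cardinal.{u}).ord}) :=
    fun b₁ b₂ h => greedyCode_injective c (congrArg Subtype.val h)
  rw [← Cardinal.lift_le.{u + 1}, lift_continuum]
  exact (lift_mk_le_lift_mk_of_injective hinj).trans
    (by simpa using mk_sigma_Iio_arrow_nat_le_continuum)

/-- The partition relation `𝔠⁺ → (ω)²_ω`. -/
theorem exists_strictMono_color_eq (hι : 𝔠 < #ι) :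
    ∃ (f : ℕ → ι) (n : ℕ), StrictMono f ∧ ∀ k l, k < l → c (f k) (f l) = n := by
  by_contra! h
  have hfin : ∀ b n, {a ∈ greedySet c b | c a b = n}.Finite := fun b n => by
    by_contra hinf
    obtain ⟨f, hf, hfM⟩ := Set.Infinite.exists_strictMono_nat hinf
    obtain ⟨k, l, hkl, hne⟩ := h f n hf
    exact hne ((color_eq_of_mem_greedySet (hfM l).1 (hfM k).1 (hf hkl)).trans (hfM k).2)
  have hcount : ∀ b, (greedySet c b).Countable := fun b => by
    have : greedySet c b ⊆ ⋃ n, {a ∈ greedySet c b | c a b = n} :=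
      fun a ha => mem_iUnion.2 ⟨c a b, ha, rfl⟩
    exact (countable_iUnion fun n => (hfin b n).countable).mono this
  exact (hι.trans_le (mk_le_continuum_of_countable_greedySet hcount)).false

end ErdosRado

section Filter

open Filter

variable {ι : Type*} [LinearOrder ι] [WellFoundedLT ι] {X : Type*} {L : Filter X}
  {P : ι → ι → Set X}

theorem Filter.exists_strictMono_eventually_of_isCountablyGenerated [L.IsCountablyGenerated]
    (hι : 𝔠 < #ι) (hP : ∀ i j, i < j → P i j ∈ L) :
    ∃ f : ℕ → ι, StrictMono f ∧ ∀ᶠ x in L, ∀ k l, k < l → x ∈ P (f k) (f l) := by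
  classical
  obtain ⟨s, hs⟩ := L.exists_antitone_basis
  have hex : ∀ i j, i < j → ∃ n, s n ⊆ P i j := fun i j hij => hs.mem_iff.1 (hP i j hij)
  let color : ι → ι → ℕ := fun i j => if h : ∃ n, s n ⊆ P i j then Nat.find h else 0
  obtain ⟨f, n, hf, hcolor⟩ := exists_strictMono_color_eq color hι
  refine ⟨f, hf, mem_of_superset (hs.mem n) fun x hx k l hkl => ?_⟩
  have hfind : Nat.find (hex _ _ (hf hkl)) = n := by
    simpa [color, hex _ _ (hf hkl)] using hcolor k l hkl
  exact Nat.find_spec (hex _ _ (hf hkl)) (hfind ▸ hx)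

theorem Filter.exists_strictMono_eventually_of_countableInterFilter [CountableInterFilter L]
    [Infinite ι] (hP : ∀ i j, i < j → P i j ∈ L) :
    ∃ f : ℕ → ι, StrictMono f ∧ ∀ᶠ x in L, ∀ k l, k < l → x ∈ P (f k) (f l) := by
  obtain ⟨f, hf, -⟩ := Set.infinite_univ.exists_strictMono_nat (ι := ι)
  refine ⟨f, hf, ?_⟩
  simp only [eventually_countable_forall]
  exact fun k l hkl => hP _ _ (hf hkl)

end Filter

section Topology

open Filter Topology

variable {X : Type*} [LinearOrder X] [TopologicalSpace X] [OrderTopology X]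

theorem mem_derivedSet_iff_frequently_nhdsLT [SuccOrder X] {A : Set X} {a : X} :
    a ∈ derivedSet A ↔ ∃ᶠ x in 𝓝[<] a, x ∈ A := by
  rw [mem_derivedSet, accPt_iff_frequently_nhdsNE, ← nhdsLT_sup_nhdsGT, SuccOrder.nhdsGT,
    sup_bot_eq]

/-- The dichotomy `cf a ≤ ω` or `cf a > ω` for the left neighbourhoods of `a`. -/
theorem isCountablyGenerated_or_countableInterFilter_nhdsLT (a : X) :
    (𝓝[<] a).IsCountablyGenerated ∨ CountableInterFilter (𝓝[<] a) := by
  by_cases hcof : ∃ C : Set X, C.Countable ∧ C ⊆ Iio a ∧ ∀ b < a, ∃ c ∈ C, b ≤ c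
  · left
    obtain ⟨C, hCc, hCa, hC⟩ := hcof
    rcases isEmpty_or_nonempty (Iio a) with hmin | ⟨⟨b, hb⟩⟩
    · rw [Set.isEmpty_coe_sort.1 hmin, nhdsWithin_empty]
      infer_instance
    refine HasCountableBasis.isCountablyGenerated
      ⟨(nhdsLT_basis_of_exists_lt ⟨b, hb⟩).to_hasBasis (p' := (· ∈ C)) (s' := (Ioo · a))
        (fun b hb => (hC b hb).imp fun c hc => ⟨hc.1, Ioo_subset_Ioo_left hc.2⟩)
        (fun c hc => ⟨c, hCa hc, subset_rfl⟩), hCc⟩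
  · right
    push Not at hcof
    refine ⟨fun S hS hSL => ?_⟩
    obtain ⟨g, hga, -⟩ := hcof ∅ countable_empty (empty_subset _)
    have hbasis := nhdsLT_basis_of_exists_lt ⟨g, hga⟩
    have : Nonempty X := ⟨g⟩
    choose! b hb hbS using fun s hs => hbasis.mem_iff.1 (hSL s hs)
    obtain ⟨g, hga, hg⟩ := hcof (b '' S) (hS.image b) (image_subset_iff.2 hb)
    exact hbasis.mem_iff.2 ⟨g, hga, fun x hx => mem_sInter.2 fun s hs =>
      hbS s hs ⟨(hg _ (mem_image_of_mem b hs)).trans hx.1, hx.2⟩⟩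

theorem notMem_derivedSet_of_subset_derivedSet_succ [WellFoundedLT X] {W : ℕ → Set X} {g a : X}
    (hga : g < a) (hW : ∀ k, W k ∩ Ioo g a ⊆ derivedSet (W (k + 1))) : a ∉ derivedSet (W 0) := by
  let _ : SuccOrder X := SuccOrder.ofLinearWellFoundedLT X
  suffices ∀ y, g < y → y ≤ a → ∀ k, y ∉ derivedSet (W k) from this a hga le_rfl 0
  intro y
  induction y using WellFoundedLT.induction with
  | ind y ih =>
    intro hgy hya k hy
    obtain ⟨x, ⟨hgx, hxy⟩, hx⟩ := ((nhdsLT_basis_of_exists_lt ⟨g, hgy⟩).frequently_iff.1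
      (mem_derivedSet_iff_frequently_nhdsLT.1 hy)) g hgy
    exact ih x hxy hgx (hxy.le.trans hya) (k + 1) (hW k ⟨hx, hgx, hxy.trans_le hya⟩)

theorem exists_strictMono_eventually_nhdsLT {ι : Type*} [LinearOrder ι] [WellFoundedLT ι]
    (hι : 𝔠 < #ι) (a : X) {P : ι → ι → Set X} (hP : ∀ i j, i < j → P i j ∈ 𝓝[<] a) :
    ∃ f : ℕ → ι, StrictMono f ∧ ∀ᶠ x in 𝓝[<] a, ∀ k l, k < l → x ∈ P (f k) (f l) := by
  rcases isCountablyGenerated_or_countableInterFilter_nhdsLT a with h | h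
  · exact exists_strictMono_eventually_of_isCountablyGenerated hι hP
  · have : Infinite ι := Cardinal.infinite_iff.2 (aleph0_le_continuum.trans hι.le)
    exact exists_strictMono_eventually_of_countableInterFilter hP

theorem not_forall_mem_derivedSet [WellFoundedLT X] {ι : Type*} [LinearOrder ι] [WellFoundedLT ι]
    (hι : 𝔠 < #ι) {V : ι → Set X} {a : X}
    (hV : ∀ i j, i < j → a ∉ derivedSet (V i \ derivedSet (V j))) :
    ¬ ∀ i, a ∈ derivedSet (V i) := by
  let _ : SuccOrder X := SuccOrder.ofLinearWellFoundedLT X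
  intro hdia
  have hP : ∀ i j, i < j → {x | x ∈ V i → x ∈ derivedSet (V j)} ∈ 𝓝[<] a := fun i j hij => by
    have := hV i j hij
    rw [mem_derivedSet_iff_frequently_nhdsLT, not_frequently] at this
    filter_upwards [this] with x hx hxV using not_not.1 fun h => hx ⟨hxV, h⟩
  obtain ⟨f, hf, hev⟩ := exists_strictMono_eventually_nhdsLT hι a hP
  obtain ⟨b, -, hb⟩ := ((mem_derivedSet_iff_frequently_nhdsLT.1 (hdia (f 0))).and_eventually
    self_mem_nhdsWithin).exists
  obtain ⟨g, hga, hg⟩ := (nhdsLT_basis_of_exists_lt ⟨b, hb⟩).eventually_iff.1 hev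
  exact notMem_derivedSet_of_subset_derivedSet_succ (W := V ∘ f) hga
    (fun k x hx => hg ⟨hx.2.1, hx.2.2⟩ k (k + 1) k.lt_succ_self hx.1) (hdia (f 0))

end Topology

theorem tsat_box {P X : Type*} [TopologicalSpace X] (V : P → Set X) (φ : Fml P) :
    tsat V φ.box = (derivedSet (tsat V φ)ᶜ)ᶜ := by
  simp [Fml.box, Fml.neg, tsat]

instance : WellFoundedLT PIdx :=
  inferInstanceAs (WellFoundedLT {i : Ordinal // i < (Order.succ (2 ^ ℵ₀) : Cardinal).ord})

theorem continuum_lt_mk_pIdx : 𝔠 < #PIdx := by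
  change 𝔠 < #(Iio _)
  rw [mk_Iio_ordinal, card_ord, two_power_aleph0, lift_succ, lift_continuum]
  exact Order.lt_succ _

theorem stmt_14 (Θ : Ordinal) (V : PIdx → Set {x : Ordinal // x < Θ})
    (α : {x : Ordinal // x < Θ}) :
    ¬ ∀ φ ∈ GammaSet, α ∈ @tsat PIdx _ (ordTop Θ) V φ := by
  let _ := ordTop Θ
  have : OrderTopology {x : Ordinal // x < Θ} := ⟨rfl⟩
  intro H
  refine not_forall_mem_derivedSet continuum_lt_mk_pIdx (fun i j hij => ?_)
    fun i => H _ (Or.inl ⟨i, rfl⟩)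
  have := H _ (Or.inr ⟨i, j, hij, rfl⟩)
  simpa [tsat_box, tsat, Set.sdiff_eq] using this
end

section
/- In the Case-1 configuration: let α be a limit ordinal of countable cofinality with cofinal increasing sequence ⟨αₙ : n < ω⟩, and suppose M is a topological model on an ordinal Θ > α with the order topology such that M, α satisfies ◇pᵢ for all i < 𝔠⁺ and □(pᵢ → ◇pⱼ) for all i < j < 𝔠⁺. Then there is no uncountable S ⊆ 𝔠⁺ and n* < ω such that M, β ⊨ pᵢ → ◇pⱼ for all β ∈ (α_{n*}, α) and all i < j in S. (Equivalently, from such S one derives an infinite strictly decreasing sequence of ordinals, a contradiction.) -/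
/-! Choose indices `i₀ < i₁ < ⋯` in `S`. By the hypothesis on `S`, a point `β ∈ (α_{n*}, α)` where
`p_{iₙ}` holds is a limit of points where `p_{iₙ₊₁}` holds; in a well-order limits are approached
from the left, so one of these lies in `(α_{n*}, β)`. Well-founded induction on `β` then shows that
no `p_{iₙ}` holds anywhere on `(α_{n*}, α)`, contradicting `◇p_{i₀}` at `α`. -/

open Set Filter Topology

theorem Set.Infinite.exists_strictMono_mem {α : Type*} [LinearOrder α] [WellFoundedLT α]
    {s : Set α} (hs : s.Infinite) : ∃ f : ℕ → α, StrictMono f ∧ ∀ n, f n ∈ s := by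
  let e := hs.natEmbedding
  obtain ⟨g, hg⟩ := (IsWF.of_wellFoundedLT s).isPWO.exists_monotone_subseq
    (f := fun n ↦ (e n : α)) fun n ↦ (e n).2
  refine ⟨fun n ↦ e (g n), hg.strictMono_of_injective ?_, fun n ↦ (e (g n)).2⟩
  exact (Subtype.val_injective.comp e.injective).comp g.injective

section WellOrderTopology

variable {X : Type*} [LinearOrder X] [TopologicalSpace X] [OrderTopology X] [WellFoundedLT X]

theorem exists_mem_Ioo_of_mem_derivedSet {A : Set X} {lo β : X} (hlo : lo < β)
    (hβ : β ∈ derivedSet A) : ∃ γ ∈ A, γ ∈ Ioo lo β := by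
  -- every point of a well-order has an immediate successor, so it is not a limit from the right
  let _ := SuccOrder.ofLinearWellFoundedLT X
  rw [mem_derivedSet, accPt_iff_frequently_nhdsNE, ← SuccOrder.nhdsLT_eq_nhdsNE] at hβ
  exact (hβ.and_eventually (Ioo_mem_nhdsLT hlo)).exists

theorem notMem_derivedSet_of_chain {U : ℕ → Set X} {lo α : X} (hlo : lo < α)
    (hstep : ∀ n, ∀ β ∈ Ioo lo α, β ∈ U n → β ∈ derivedSet (U (n + 1))) :
    α ∉ derivedSet (U 0) := by
  have hempty : ∀ β, ∀ n, β ∈ Ioo lo α → β ∉ U n := by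
    intro β
    induction β using WellFoundedLT.induction with
    | _ β ih =>
      intro n hβ hβU
      obtain ⟨γ, hγU, hloγ, hγβ⟩ := exists_mem_Ioo_of_mem_derivedSet hβ.1 (hstep n β hβ hβU)
      exact ih γ hγβ (n + 1) ⟨hloγ, hγβ.trans hβ.2⟩ hγU
  intro hα
  obtain ⟨γ, hγU, hγ⟩ := exists_mem_Ioo_of_mem_derivedSet hlo hα
  exact hempty γ 0 hγ hγU

end WellOrderTopology

instance inst_s15 : WellFoundedLT PIdx := inferInstanceAs (WellFoundedLT {i : Ordinal // _})

theorem stmt_15_general (Θ : Ordinal) (V : PIdx → Set {x : Ordinal // x < Θ})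
    (α : {x : Ordinal // x < Θ})
    (a : ℕ → Ordinal) (ha_lt : ∀ n, a n < α.1)
    (h1 : ∀ i : PIdx, α ∈ @tsat PIdx _ (ordTop Θ) V (Fml.dia (Fml.var i))) :
    ¬ ∃ (S : Set PIdx) (nstar : ℕ), ¬ S.Countable ∧
      ∀ β : {x : Ordinal // x < Θ}, a nstar < β.1 → β.1 < α.1 →
        ∀ i ∈ S, ∀ j ∈ S, i < j →
          β ∈ @tsat PIdx _ (ordTop Θ) V (Fml.imp (Fml.var i) (Fml.dia (Fml.var j))) := by
  rintro ⟨S, nstar, hS, hSimp⟩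
  let _ := ordTop Θ
  have : OrderTopology {x : Ordinal // x < Θ} := ⟨rfl⟩
  have hSinf : S.Infinite := fun h ↦ hS h.countable
  obtain ⟨f, hf, hfS⟩ := hSinf.exists_strictMono_mem
  let lo : {x : Ordinal // x < Θ} := ⟨a nstar, (ha_lt nstar).trans α.2⟩
  refine notMem_derivedSet_of_chain (U := fun n ↦ V (f n)) (lo := lo)
    (ha_lt nstar) (fun n β hβ hβV ↦ ?_) (h1 (f 0))
  exact (hSimp β hβ.1 hβ.2 _ (hfS n) _ (hfS (n + 1)) (hf n.lt_succ_self)).resolve_left (· hβV)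

theorem stmt_15 (Θ : Ordinal) (V : PIdx → Set {x : Ordinal // x < Θ})
    (α : {x : Ordinal // x < Θ}) (hα : Order.IsSuccLimit α.1) (hcf : α.1.cof = Cardinal.aleph0)
    (a : ℕ → Ordinal) (ha_mono : StrictMono a) (ha_lt : ∀ n, a n < α.1)
    (ha_cof : sSup (Set.range a) = α.1)
    (h1 : ∀ i : PIdx, α ∈ @tsat PIdx _ (ordTop Θ) V (Fml.dia (Fml.var i)))
    (h2 : ∀ i j : PIdx, i < j →
      α ∈ @tsat PIdx _ (ordTop Θ) V (Fml.box (Fml.imp (Fml.var i) (Fml.dia (Fml.var j))))) :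
    ¬ ∃ (S : Set PIdx) (nstar : ℕ), ¬ S.Countable ∧
      ∀ β : {x : Ordinal // x < Θ}, a nstar < β.1 → β.1 < α.1 →
        ∀ i ∈ S, ∀ j ∈ S, i < j →
          β ∈ @tsat PIdx _ (ordTop Θ) V (Fml.imp (Fml.var i) (Fml.dia (Fml.var j))) :=
  stmt_15_general Θ V α a ha_lt h1
end
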